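/- Let G be a finite simple graph, I a maximum critical independent set, and X = I ∪ N(I). Then |nucleus(G)| + |diadem(G)| ≤ |nucleus(G[X])| + |diadem(G[X])|. -/

import Mathlib

open Set

variable {V : Type*} [Fintype V]

/-- `S` is an independent set in `G`: no two of its vertices are adjacent. -/
def IsIndep (G : SimpleGraph V) (S : Set V) : Prop :=
  ∀ u ∈ S, ∀ v ∈ S, ¬ G.Adj u v

/-- The neighborhood `N(X)` of a set of vertices. -/
def nbhd (G : SimpleGraph V) (X : Set V) : Set V := {v | ∃ u ∈ X, G.Adj u v}

/-- The difference `d(X) = |X| - |N(X)|` computed in the induced subgraph `G[W]`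
(neighborhoods are intersected with `W`). -/
noncomputable def dOn (G : SimpleGraph V) (W X : Set V) : ℤ :=
  (X.ncard : ℤ) - ((nbhd G X ∩ W).ncard : ℤ)

/-- The difference `d(X) = |X| - |N(X)|` in `G`. -/
noncomputable def dG (G : SimpleGraph V) (X : Set V) : ℤ := dOn G Set.univ X

/-- `S` is a critical independent set of the induced subgraph `G[W]`:
it is an independent subset of `W` whose difference attains
`max {d(Y) : Y ⊆ W}` (the critical difference of `G[W]`). -/
def IsCritIndepOn (G : SimpleGraph V) (W S : Set V) : Prop :=
  S ⊆ W ∧ IsIndep G S ∧ ∀ Y ⊆ W, dOn G W Y ≤ dOn G W S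

/-- `S` is a critical independent set of `G`. -/
def IsCritIndep (G : SimpleGraph V) (S : Set V) : Prop := IsCritIndepOn G Set.univ S

/-- A maximum critical independent set of `G[W]`: a critical independent set of
largest cardinality. -/
def IsMaxCritIndepOn (G : SimpleGraph V) (W S : Set V) : Prop :=
  IsCritIndepOn G W S ∧ ∀ T, IsCritIndepOn G W T → T.ncard ≤ S.ncard

/-- A maximum critical independent set of `G`. -/
def IsMaxCritIndep (G : SimpleGraph V) (S : Set V) : Prop := IsMaxCritIndepOn G Set.univ S

/-- A maximum independent set of the induced subgraph `G[W]`. -/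
def IsMaxIndepOn (G : SimpleGraph V) (W S : Set V) : Prop :=
  S ⊆ W ∧ IsIndep G S ∧ ∀ T ⊆ W, IsIndep G T → T.ncard ≤ S.ncard

/-- A maximum independent set of `G`. -/
def IsMaxIndep (G : SimpleGraph V) (S : Set V) : Prop := IsMaxIndepOn G Set.univ S

/-- The independence number of the induced subgraph `G[W]`. -/
noncomputable def alphaOn (G : SimpleGraph V) (W : Set V) : ℕ :=
  sSup {n | ∃ S ⊆ W, IsIndep G S ∧ S.ncard = n}

/-- The independence number `α(G)`. -/
noncomputable def alpha (G : SimpleGraph V) : ℕ := alphaOn G Set.univ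

/-- The maximum matching number `μ(G)`. -/
noncomputable def mu (G : SimpleGraph V) : ℕ :=
  sSup {n | ∃ M : G.Subgraph, M.IsMatching ∧ M.edgeSet.ncard = n}

/-- `G` is a König-Egerváry graph: `α(G) + μ(G) = |V(G)|`. -/
def IsKE (G : SimpleGraph V) : Prop := alpha G + mu G = Fintype.card V

/-- `nucleus(G[W])`: intersection of all maximum critical independent sets of `G[W]`. -/
def nucleusOn (G : SimpleGraph V) (W : Set V) : Set V := ⋂₀ {S | IsMaxCritIndepOn G W S}

/-- `nucleus(G)`. -/
def nucleus (G : SimpleGraph V) : Set V := nucleusOn G Set.univ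

/-- `diadem(G[W])`: union of all maximum critical independent sets of `G[W]`. -/
def diademOn (G : SimpleGraph V) (W : Set V) : Set V := ⋃₀ {S | IsMaxCritIndepOn G W S}

/-- `diadem(G)`. -/
def diadem (G : SimpleGraph V) : Set V := diademOn G Set.univ

/-- `ker(G)`: intersection of all critical independent sets of `G`. -/
def kerG (G : SimpleGraph V) : Set V := ⋂₀ {S | IsCritIndep G S}

/-- `core(G)`: intersection of all maximum independent sets of `G`. -/
def core (G : SimpleGraph V) : Set V := ⋂₀ {S | IsMaxIndep G S}

/-- `corona(G)`: union of all maximum independent sets of `G`. -/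
def corona (G : SimpleGraph V) : Set V := ⋃₀ {S | IsMaxIndep G S}

/-!
Every critical independent set of `G` lies in `X = I ∪ N(I)`, and criticality of `I` gives Hall's
condition for a matching `f` of `N(I)` into `I`. Hence every maximum critical independent set of
`G` is one of `G[X]`, and those of `G[X]` all have size `|I|`; so `nucleus(G[X]) ⊆ nucleus(G)` and
`diadem(G) ⊆ diadem(G[X])`. For a maximum critical independent set `T` of `G[X]`, `f` maps `T \ I`
onto `I \ T`. So every `v ∈ nucleus(G) \ nucleus(G[X])` is `f b` for some `b` in some such `T`,
and `b ∉ diadem(G)` because `b` is adjacent to `v`, which lies in every maximum critical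
independent set of `G`. Thus `f` maps `diadem(G[X]) \ diadem(G)` onto
`nucleus(G) \ nucleus(G[X])`.
-/

def IsMatchingInto (G : SimpleGraph V) (A B : Set V) (f : V → V) : Prop :=
  InjOn f A ∧ MapsTo f A B ∧ ∀ a ∈ A, G.Adj a (f a)

section CriticalIndependentSets

variable {G : SimpleGraph V} {A B I S T Y : Set V}

omit [Fintype V]

lemma nbhd_mono (h : A ⊆ B) : nbhd G A ⊆ nbhd G B :=
  fun _ ⟨u, hu, hadj⟩ => ⟨u, h hu, hadj⟩

lemma nbhd_union : nbhd G (A ∪ B) = nbhd G A ∪ nbhd G B := by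
  ext v
  simp only [nbhd, mem_union, mem_ofPred_eq, or_and_right, exists_or]

lemma sdiff_subset_nbhd (hT : T ⊆ I ∪ nbhd G I) : T \ I ⊆ nbhd G I :=
  fun _ hv => (hT hv.1).resolve_left hv.2

lemma IsIndep.disjoint_nbhd (hS : IsIndep G S) : Disjoint S (nbhd G S) :=
  disjoint_left.2 fun v hv ⟨u, hu, hadj⟩ => hS u hu v hv hadj

lemma isIndep_sdiff_nbhd (Z : Set V) : IsIndep G (Z \ nbhd G Z) :=
  fun u hu _ hw hadj => hw.2 ⟨u, hu.1, hadj⟩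

lemma dG_eq (Y : Set V) : dG G Y = Y.ncard - (nbhd G Y).ncard := by
  simp [dG, dOn]

lemma IsCritIndep.dG_le (hS : IsCritIndep G S) (Y : Set V) : dG G Y ≤ dG G S :=
  hS.2.2 Y (subset_univ Y)

lemma IsCritIndepOn.subset {W : Set V} (hS : IsCritIndepOn G W S) : S ⊆ W := hS.1

lemma IsCritIndepOn.isIndep {W : Set V} (hS : IsCritIndepOn G W S) : IsIndep G S := hS.2.1

lemma IsMaxCritIndep.isCritIndep (hI : IsMaxCritIndep G I) : IsCritIndep G I := hI.1

lemma IsCritIndep.of_dG_le (hS : IsCritIndep G S) (hT : IsIndep G T) (h : dG G S ≤ dG G T) :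
    IsCritIndep G T :=
  ⟨subset_univ T, hT, fun Y _ => (hS.dG_le Y).trans h⟩

lemma IsMatchingInto.mapsTo_sdiff {f : V → V} (hf : IsMatchingInto G (nbhd G I) I f)
    (hT : IsIndep G T) (hTX : T ⊆ I ∪ nbhd G I) : MapsTo f (T \ I) (I \ T) := fun a ha =>
  have haN := sdiff_subset_nbhd hTX ha
  ⟨hf.2.1 haN, fun hfa => hT a ha.1 (f a) hfa (hf.2.2 a haN)⟩

variable [Finite V]

lemma dG_le_dOn (W S : Set V) : dG G S ≤ dOn G W S := by
  have := ncard_le_ncard (inter_subset_left : nbhd G S ∩ W ⊆ nbhd G S)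
  rw [dG_eq, dOn]
  omega

lemma dG_add_dG_le (A B : Set V) : dG G A + dG G B ≤ dG G (A ∪ B) + dG G (A ∩ B) := by
  have hY := ncard_union_add_ncard_inter A B
  have hN := ncard_union_add_ncard_inter (nbhd G A) (nbhd G B)
  have hinter : (nbhd G (A ∩ B)).ncard ≤ (nbhd G A ∩ nbhd G B).ncard :=
    ncard_le_ncard (subset_inter (nbhd_mono inter_subset_left) (nbhd_mono inter_subset_right))
  simp only [dG_eq, nbhd_union]
  omega

lemma dG_le_dG_sdiff_nbhd (Z : Set V) : dG G Z ≤ dG G (Z \ nbhd G Z) := by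
  have hZ := ncard_inter_add_ncard_sdiff_eq_ncard Z (nbhd G Z)
  have hN := ncard_inter_add_ncard_sdiff_eq_ncard (nbhd G Z) Z
  have hsub : nbhd G (Z \ nbhd G Z) ⊆ nbhd G Z \ Z :=
    fun v ⟨u, hu, hadj⟩ => ⟨⟨u, hu.1, hadj⟩, fun hv => hu.2 ⟨v, hv, hadj.symm⟩⟩
  have := ncard_le_ncard hsub
  rw [inter_comm] at hN
  rw [dG_eq, dG_eq]
  omega

lemma IsCritIndep.dG_le_dG_union (hS : IsCritIndep G S) (T : Set V) :
    dG G T ≤ dG G (S ∪ T) := by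
  have := dG_add_dG_le (G := G) S T
  have := hS.dG_le (S ∩ T)
  omega

lemma IsMaxCritIndep.subset_union_nbhd (hI : IsMaxCritIndep G I) (hS : IsCritIndep G S) :
    S ⊆ I ∪ nbhd G I := by
  set Z := S ∪ I
  set K := I ∪ (Z \ nbhd G Z)
  have hK : IsCritIndep G K := by
    refine hI.isCritIndep.of_dG_le ?_ ?_
    · rintro u (hu | hu) v (hv | hv) hadj
      · exact hI.isCritIndep.isIndep u hu v hv hadj
      · exact hv.2 ⟨u, Or.inr hu, hadj⟩
      · exact hu.2 ⟨v, Or.inr hv, hadj.symm⟩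
      · exact isIndep_sdiff_nbhd Z u hu v hv hadj
    · calc dG G I ≤ dG G Z := hS.dG_le_dG_union I
        _ ≤ dG G (Z \ nbhd G Z) := dG_le_dG_sdiff_nbhd Z
        _ ≤ dG G K := hI.isCritIndep.dG_le_dG_union _
  have hKI : I = K := eq_of_subset_of_ncard_le subset_union_left (hI.2 K hK)
  intro v hvS
  by_contra hvX
  have hvK : v ∈ K := by
    refine Or.inr ⟨Or.inl hvS, ?_⟩
    rw [nbhd_union]
    rintro (hv | hv)
    · exact disjoint_left.1 hS.isIndep.disjoint_nbhd hvS hv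
    · exact hvX (Or.inr hv)
  exact hvX (Or.inl (hKI ▸ hvK))

lemma IsCritIndep.ncard_le_ncard_nbhd_inter (hI : IsCritIndep G I) (hA : A ⊆ nbhd G I) :
    A.ncard ≤ (nbhd G A ∩ I).ncard := by
  -- compare `d(I)` with `d(I \ N(A))`
  have hI' := ncard_inter_add_ncard_sdiff_eq_ncard I (nbhd G A)
  have hN := ncard_sdiff_add_ncard_of_subset hA
  have hsub : nbhd G (I \ nbhd G A) ⊆ nbhd G I \ A :=
    fun v ⟨u, hu, hadj⟩ => ⟨⟨u, hu.1, hadj⟩, fun hv => hu.2 ⟨v, hv, hadj.symm⟩⟩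
  have := ncard_le_ncard hsub
  have hd := hI.dG_le (I \ nbhd G A)
  rw [dG_eq, dG_eq] at hd
  rw [inter_comm]
  omega

lemma IsCritIndep.exists_isMatchingInto (hI : IsCritIndep G I) :
    ∃ f, IsMatchingInto G (nbhd G I) I f := by
  classical
  have := Fintype.ofFinite V
  have hall : ∀ s : Finset (nbhd G I),
      s.card ≤ (Finset.univ.filter fun b => ∃ a ∈ s, b ∈ I ∧ G.Adj a b).card := by
    intro s
    have h := hI.ncard_le_ncard_nbhd_inter (A := Subtype.val '' (s : Set (nbhd G I)))
      (by rintro _ ⟨a, -, rfl⟩; exact a.2)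
    rw [ncard_image_of_injective _ Subtype.val_injective, ncard_coe_finset] at h
    convert h using 1
    rw [← ncard_coe_finset]
    congr 1
    ext b
    rw [Finset.coe_filter]
    constructor
    · rintro ⟨-, a, ha, hbI, hadj⟩
      exact ⟨⟨a, ⟨a, ha, rfl⟩, hadj⟩, hbI⟩
    · rintro ⟨⟨-, ⟨a, ha, rfl⟩, hadj⟩, hbI⟩
      exact ⟨Finset.mem_univ b, a, ha, hbI, hadj⟩
  obtain ⟨g, hg_inj, hg⟩ := (Fintype.all_card_le_filter_rel_iff_exists_injective _).1 hall
  refine ⟨fun v => if h : v ∈ nbhd G I then g ⟨v, h⟩ else v, ?_, ?_, ?_⟩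
  · intro a ha b hb hab
    simp only [dif_pos ha, dif_pos hb] at hab
    exact congrArg Subtype.val (hg_inj hab)
  · intro a ha
    simpa only [dif_pos ha] using (hg ⟨a, ha⟩).1
  · intro a ha
    simpa only [dif_pos ha] using (hg ⟨a, ha⟩).2

lemma IsCritIndep.ncard_le_of_isIndep (hI : IsCritIndep G I) (hT : IsIndep G T)
    (hTX : T ⊆ I ∪ nbhd G I) : T.ncard ≤ I.ncard := by
  obtain ⟨f, hf⟩ := hI.exists_isMatchingInto
  rw [ncard_le_ncard_iff_ncard_sdiff_le_ncard_sdiff]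
  exact ncard_le_ncard_of_injOn f (hf.mapsTo_sdiff hT hTX) (hf.1.mono (sdiff_subset_nbhd hTX))

lemma IsCritIndep.dOn_le (hI : IsCritIndep G I) (hY : Y ⊆ I ∪ nbhd G I) :
    dOn G (I ∪ nbhd G I) Y ≤ dG G I := by
  have hY' := ncard_inter_add_ncard_sdiff_eq_ncard Y I
  have hhall := hI.ncard_le_ncard_nbhd_inter (sdiff_subset_nbhd hY)
  have hdisj : Disjoint (nbhd G (Y ∩ I)) (nbhd G (Y \ I) ∩ I) :=
    disjoint_left.2 fun v hv hv' =>
      disjoint_left.1 hI.isIndep.disjoint_nbhd hv'.2 (nbhd_mono inter_subset_right hv)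
  have hsub : nbhd G (Y ∩ I) ∪ (nbhd G (Y \ I) ∩ I) ⊆ nbhd G Y ∩ (I ∪ nbhd G I) := by
    rintro v (hv | ⟨hv, hvI⟩)
    · exact ⟨nbhd_mono inter_subset_left hv, Or.inr (nbhd_mono inter_subset_right hv)⟩
    · exact ⟨nbhd_mono sdiff_subset hv, Or.inl hvI⟩
  have hN := ncard_le_ncard hsub
  rw [ncard_union_eq hdisj] at hN
  have hd := hI.dG_le (Y ∩ I)
  rw [dG_eq, dG_eq] at hd
  rw [dOn, dG_eq]
  omega

lemma IsCritIndep.isCritIndepOn_self (hI : IsCritIndep G I) :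
    IsCritIndepOn G (I ∪ nbhd G I) I := by
  have hd : dOn G (I ∪ nbhd G I) I = dG G I := by
    rw [dOn, dG_eq, inter_eq_self_of_subset_left subset_union_right]
  exact ⟨subset_union_left, hI.isIndep, fun Y hY => (hI.dOn_le hY).trans hd.ge⟩

lemma IsMaxCritIndep.isCritIndepOn (hI : IsMaxCritIndep G I) (hS : IsCritIndep G S) :
    IsCritIndepOn G (I ∪ nbhd G I) S := by
  have hSI : dG G I ≤ dG G S := hS.dG_le I
  exact ⟨hI.subset_union_nbhd hS, hS.isIndep,
    fun Y hY => ((hI.isCritIndep.dOn_le hY).trans hSI).trans (dG_le_dOn _ S)⟩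

lemma IsMaxCritIndep.isMaxCritIndepOn (hI : IsMaxCritIndep G I) (hS : IsMaxCritIndep G S) :
    IsMaxCritIndepOn G (I ∪ nbhd G I) S :=
  ⟨hI.isCritIndepOn hS.1, fun _ hT =>
    (hI.isCritIndep.ncard_le_of_isIndep hT.isIndep hT.subset).trans (hS.2 I hI.isCritIndep)⟩

lemma IsCritIndep.ncard_eq_of_isMaxCritIndepOn (hI : IsCritIndep G I)
    (hT : IsMaxCritIndepOn G (I ∪ nbhd G I) T) : T.ncard = I.ncard :=
  (hI.ncard_le_of_isIndep hT.1.isIndep hT.1.subset).antisymm (hT.2 I hI.isCritIndepOn_self)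

lemma IsMatchingInto.surjOn_sdiff {f : V → V} (hI : IsCritIndep G I)
    (hf : IsMatchingInto G (nbhd G I) I f) (hT : IsMaxCritIndepOn G (I ∪ nbhd G I) T) :
    SurjOn f (T \ I) (I \ T) := by
  have hinj := hf.1.mono (sdiff_subset_nbhd hT.1.subset)
  have hcard := hI.ncard_eq_of_isMaxCritIndepOn hT
  rw [ncard_eq_ncard_iff_ncard_sdiff_eq_ncard_sdiff] at hcard
  exact (eq_of_subset_of_ncard_le (hf.mapsTo_sdiff hT.1.isIndep hT.1.subset).image_subset
    (hcard.symm.trans hinj.ncard_image.symm).le).superset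

lemma IsMaxCritIndep.nucleusOn_subset_nucleus (hI : IsMaxCritIndep G I) :
    nucleusOn G (I ∪ nbhd G I) ⊆ nucleus G :=
  sInter_subset_sInter fun _ hS => hI.isMaxCritIndepOn hS

lemma IsMaxCritIndep.diadem_subset_diademOn (hI : IsMaxCritIndep G I) :
    diadem G ⊆ diademOn G (I ∪ nbhd G I) :=
  sUnion_subset_sUnion fun _ hS => hI.isMaxCritIndepOn hS

lemma IsMaxCritIndep.nucleus_sdiff_subset_image {f : V → V} (hI : IsMaxCritIndep G I)
    (hf : IsMatchingInto G (nbhd G I) I f) :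
    nucleus G \ nucleusOn G (I ∪ nbhd G I) ⊆ f '' (diademOn G (I ∪ nbhd G I) \ diadem G) := by
  rintro v ⟨hv, hv'⟩
  obtain ⟨T, hT, hvT⟩ : ∃ T, IsMaxCritIndepOn G (I ∪ nbhd G I) T ∧ v ∉ T := by
    simpa [nucleusOn] using hv'
  obtain ⟨b, hb, rfl⟩ := hf.surjOn_sdiff hI.isCritIndep hT ⟨mem_sInter.1 hv I hI, hvT⟩
  refine ⟨b, ⟨⟨T, hT, hb.1⟩, ?_⟩, rfl⟩
  rintro ⟨S, hS, hbS⟩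
  exact hS.1.isIndep b hbS (f b) (mem_sInter.1 hv S hS)
    (hf.2.2 b (sdiff_subset_nbhd hT.1.subset hb))

end CriticalIndependentSets

/-- For a maximum critical independent set `I` and `X = I ∪ N(I)`,
`|nucleus(G)| + |diadem(G)| ≤ |nucleus(G[X])| + |diadem(G[X])|`. -/
theorem stmt9 (G : SimpleGraph V) (I X : Set V) (hI : IsMaxCritIndep G I)
    (hX : X = I ∪ nbhd G I) :
    (nucleus G).ncard + (diadem G).ncard ≤ (nucleusOn G X).ncard + (diademOn G X).ncard := by
  subst hX
  obtain ⟨f, hf⟩ := hI.isCritIndep.exists_isMatchingInto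
  have hswap := (ncard_le_ncard (hI.nucleus_sdiff_subset_image hf)).trans ncard_image_le
  have hnucleus := ncard_sdiff_add_ncard_of_subset hI.nucleusOn_subset_nucleus
  have hdiadem := ncard_sdiff_add_ncard_of_subset hI.diadem_subset_diademOn
  omega
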